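/- arXiv:1902.06720 — 2 statements merged into one kernel-verified Lean document; each statement's English description precedes it below -/
import Mathlib

section
/- Let X̄ be a real N×p matrix with 𝒦̂ = X̄ X̄ᵀ invertible, let Y ∈ ℝ^N, x̄* ∈ ℝ^p, η > 0, and let θ : [0,∞) → ℝ^p be differentiable with θ′(t) = − η X̄ᵀ (X̄ θ(t) − Y) for all t ≥ 0 (gradient flow on the readout-layer squared loss). Then for every t ≥ 0 the prediction f_t(x*) = ⟨x̄*, θ(t)⟩ satisfies f_t(x*) = f_0(x*) + 𝒦̂(x*,𝒳) 𝒦̂⁻¹ (exp(−η 𝒦̂ t) − I)(f_0(𝒳) − Y), where f_0(𝒳) = X̄ θ(0) ∈ ℝ^N and 𝒦̂(x*,𝒳) = (X̄ x̄*)ᵀ ∈ ℝ^{1×N}. -/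
open Matrix

/-!
The residual `r = X̄θ - Y` solves the linear system `r' = -η 𝒦̂ r`, so `r t = exp (-η t 𝒦̂) r 0`.
The velocity of `θ` lies in the row space of `X̄`, on which `X̄ᵀ 𝒦̂⁻¹ X̄` is the identity; hence
`θ - X̄ᵀ 𝒦̂⁻¹ X̄ θ` is conserved and `θ t - θ 0 = X̄ᵀ 𝒦̂⁻¹ (r t - r 0)`. Pairing with `x̄*` gives
the formula.
-/

section

variable {m n : Type*} [Fintype m] [Fintype n]

theorem HasDerivAt.matrix_mulVec {f : ℝ → n → ℝ} {f' : n → ℝ} {t : ℝ} (hf : HasDerivAt f f' t)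
    (M : Matrix m n ℝ) : HasDerivAt (fun s => M *ᵥ f s) (M *ᵥ f') t :=
  (LinearMap.toContinuousLinearMap M.mulVecLin).hasFDerivAt.comp_hasDerivAt t hf

theorem Matrix.hasDerivAt_exp_smul_mulVec [DecidableEq n] (A : Matrix n n ℝ) (v : n → ℝ) (t : ℝ) :
    HasDerivAt (fun s : ℝ => NormedSpace.exp (s • A) *ᵥ v)
      (A *ᵥ (NormedSpace.exp (t • A) *ᵥ v)) t := by
  let : NormedRing (Matrix n n ℝ) := Matrix.linftyOpNormedRing
  let : NormedAlgebra ℝ (Matrix n n ℝ) := Matrix.linftyOpNormedAlgebra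
  rw [mulVec_mulVec]
  exact (LinearMap.toContinuousLinearMap ((mulVecBilin ℝ ℝ).flip v)).hasFDerivAt.comp_hasDerivAt t
    (hasDerivAt_exp_smul_const' A t)

theorem Matrix.eq_exp_smul_mulVec_of_hasDerivAt [DecidableEq n] {A : Matrix n n ℝ}
    {r : ℝ → n → ℝ} (hr : ∀ t, 0 ≤ t → HasDerivAt r (A *ᵥ r t) t) {t : ℝ} (ht : 0 ≤ t) :
    r t = NormedSpace.exp (t • A) *ᵥ r 0 := by
  have hLip : LipschitzWith ‖LinearMap.toContinuousLinearMap A.mulVecLin‖₊ (A *ᵥ ·) :=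
    (LinearMap.toContinuousLinearMap A.mulVecLin).lipschitz
  refine ODE_solution_unique (v := fun _ => (A *ᵥ ·)) (fun _ => hLip)
    (fun s hs => (hr s hs.1).continuousAt.continuousWithinAt)
    (fun s hs => (hr s hs.1).hasDerivWithinAt)
    (fun s _ => (A.hasDerivAt_exp_smul_mulVec _ s).continuousAt.continuousWithinAt)
    (fun s _ => (A.hasDerivAt_exp_smul_mulVec _ s).hasDerivWithinAt)
    (by simp) ⟨ht, le_rfl⟩

theorem eq_of_hasDerivAt_zero_of_nonneg {E : Type*} [NormedAddCommGroup E] [NormedSpace ℝ E]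
    {f : ℝ → E} (hf : ∀ t, 0 ≤ t → HasDerivAt f 0 t) {t : ℝ} (ht : 0 ≤ t) : f t = f 0 :=
  constant_of_has_deriv_right_zero
    (fun s hs => (hf s hs.1).continuousAt.continuousWithinAt)
    (fun s hs => (hf s hs.1).hasDerivWithinAt) t ⟨ht, le_rfl⟩

theorem Matrix.sub_eq_transpose_mulVec_of_hasDerivAt [DecidableEq m] {X : Matrix m n ℝ}
    (hX : IsUnit (X * Xᵀ)) {θ : ℝ → n → ℝ} {w : ℝ → m → ℝ}
    (hθ : ∀ t, 0 ≤ t → HasDerivAt θ (Xᵀ *ᵥ w t) t) {t : ℝ} (ht : 0 ≤ t) :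
    θ t - θ 0 = Xᵀ *ᵥ ((X * Xᵀ)⁻¹ *ᵥ (X *ᵥ (θ t - θ 0))) := by
  have hconserved : ∀ s, 0 ≤ s →
      HasDerivAt (fun s => θ s - Xᵀ *ᵥ ((X * Xᵀ)⁻¹ *ᵥ (X *ᵥ θ s))) 0 s := fun s hs => by
    have h := (hθ s hs).sub
      (((hθ s hs).matrix_mulVec X).matrix_mulVec (X * Xᵀ)⁻¹ |>.matrix_mulVec Xᵀ)
    rwa [mulVec_mulVec _ X, mulVec_mulVec _ _ (X * Xᵀ),
      nonsing_inv_mul _ ((isUnit_iff_isUnit_det _).mp hX), one_mulVec, sub_self] at h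
  have h := eq_of_hasDerivAt_zero_of_nonneg hconserved ht
  simp only [mulVec_sub]
  linear_combination h

end

theorem readout_layer_gradient_flow_prediction_general {N p : ℕ}
    (Xb : Matrix (Fin N) (Fin p) ℝ)
    (K : Matrix (Fin N) (Fin N) ℝ) (hK : K = Xb * Xbᵀ) (hKinv : IsUnit K)
    (Y : Fin N → ℝ) (xstar : Fin p → ℝ) (η : ℝ)
    (θ : ℝ → (Fin p → ℝ))
    (hflow : ∀ t : ℝ, 0 ≤ t →
      HasDerivAt θ (-(η • (Xbᵀ.mulVec (Xb.mulVec (θ t) - Y)))) t) :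
    ∀ t : ℝ, 0 ≤ t →
      xstar ⬝ᵥ θ t =
        xstar ⬝ᵥ θ 0 +
          (Xb.mulVec xstar) ⬝ᵥ
            (K⁻¹.mulVec ((NormedSpace.exp (-(η * t) • K) - 1).mulVec
              (Xb.mulVec (θ 0) - Y))) := by
  intro t ht
  subst hK
  set r : ℝ → Fin N → ℝ := fun s => Xb *ᵥ θ s - Y
  have hr : ∀ s, 0 ≤ s → HasDerivAt r ((-η • (Xb * Xbᵀ)) *ᵥ r s) s := fun s hs => by
    have h := ((hflow s hs).matrix_mulVec Xb).sub_const Y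
    rwa [mulVec_neg, mulVec_smul, mulVec_mulVec, ← neg_smul, ← smul_mulVec] at h
  have hresidual : r t = NormedSpace.exp (-(η * t) • (Xb * Xbᵀ)) *ᵥ r 0 := by
    rw [eq_exp_smul_mulVec_of_hasDerivAt hr ht, smul_smul, mul_neg, mul_comm]
  have hrow : θ t - θ 0 = Xbᵀ *ᵥ ((Xb * Xbᵀ)⁻¹ *ᵥ (Xb *ᵥ (θ t - θ 0))) :=
    sub_eq_transpose_mulVec_of_hasDerivAt hKinv (w := fun s => -(η • r s))
      (fun s hs => by rw [mulVec_neg, mulVec_smul]; exact hflow s hs) ht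
  have hdisplacement :
      Xb *ᵥ (θ t - θ 0) = (NormedSpace.exp (-(η * t) • (Xb * Xbᵀ)) - 1) *ᵥ r 0 := by
    rw [sub_mulVec, one_mulVec, ← hresidual, mulVec_sub]
    exact (sub_sub_sub_cancel_right _ _ Y).symm
  rw [← sub_add_cancel (θ t) (θ 0), hrow, hdisplacement, dotProduct_add, add_comm,
    dotProduct_mulVec, vecMul_transpose]

/-- Training only the readout layer by gradient flow
`θ′(t) = −η X̄ᵀ(X̄θ(t) − Y)` yields the closed-form test prediction
`f_t(x*) = f_0(x*) + 𝒦̂(x*,𝒳) 𝒦̂⁻¹ (exp(−η𝒦̂t) − I)(f_0(𝒳) − Y)`,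
where `f_t(x*) = ⟨x̄*, θ(t)⟩`, `f_0(𝒳) = X̄θ(0)` and `𝒦̂(x*,𝒳) = (X̄x̄*)ᵀ`. -/
theorem readout_layer_gradient_flow_prediction {N p : ℕ}
    (Xb : Matrix (Fin N) (Fin p) ℝ)
    (K : Matrix (Fin N) (Fin N) ℝ) (hK : K = Xb * Xbᵀ) (hKinv : IsUnit K)
    (Y : Fin N → ℝ) (xstar : Fin p → ℝ) (η : ℝ) (hη : 0 < η)
    (θ : ℝ → (Fin p → ℝ))
    (hflow : ∀ t : ℝ, 0 ≤ t →
      HasDerivAt θ (-(η • (Xbᵀ.mulVec (Xb.mulVec (θ t) - Y)))) t) :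
    ∀ t : ℝ, 0 ≤ t →
      xstar ⬝ᵥ θ t =
        xstar ⬝ᵥ θ 0 +
          (Xb.mulVec xstar) ⬝ᵥ
            (K⁻¹.mulVec ((NormedSpace.exp (-(η * t) • K) - 1).mulVec
              (Xb.mulVec (θ 0) - Y))) :=
  readout_layer_gradient_flow_prediction_general Xb K hK hKinv Y xstar η θ hflow
end

section
/- Let f : ℝ^P → ℝ^N be continuously differentiable with Jacobian J(θ) ∈ ℝ^{N×P}, let Y ∈ ℝ^N and g(θ) = f(θ) − Y, and fix θ₀ ∈ ℝ^P. Let K ≥ 1, R₀ > 0, λ_min > 0, η₀ > 0, let Θ be a symmetric real N×N matrix with vᵀ Θ v ≥ λ_min ‖v‖₂² for all v, and let n > 0 satisfy n ≥ (18 K³ R₀ / λ_min²)². Assume: (i) for all θ, θ̃ in the closed ball B(θ₀, 3KR₀/(λ_min √n)): ‖J(θ) − J(θ̃)‖_F ≤ K √n ‖θ − θ̃‖₂ and ‖J(θ)‖_F ≤ K √n; (ii) ‖g(θ₀)‖₂ ≤ R₀; (iii) ‖Θ − (1/n) J(θ₀) J(θ₀)ᵀ‖_F ≤ λ_min/3.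 Let θ : [0,∞) → ℝ^P be differentiable with θ(0) = θ₀ and θ′(t) = − (η₀/n) J(θ(t))ᵀ g(θ(t)) for all t ≥ 0. Then for every t ≥ 0: ‖g(θ(t))‖₂ ≤ e^{−η₀ λ_min t/3} R₀, ‖θ(t) − θ₀‖₂ ≤ (3 K R₀/λ_min)(1 − e^{−η₀ λ_min t/3}) n^{−1/2}, and ‖(1/n) J(θ₀) J(θ₀)ᵀ − (1/n) J(θ(t)) J(θ(t))ᵀ‖_F ≤ 6 K³ R₀/(λ_min √n). -/
/-!
On the ball of radius `ρ = 3KR₀/(λ√n)` around `θ₀` the Jacobian bounds give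
`‖Θ̂(θ) - Θ̂(θ₀)‖_F ≤ 2K²‖θ - θ₀‖ ≤ 2K²ρ`, and the width condition makes `2K²ρ ≤ λ/3`; hence
`Θ̂(θ) ⪰ (λ/3) I` there. While the flow stays in the ball, `d/dt ‖g‖² = -2η₀ gᵀΘ̂g ≤ -(2η₀λ/3)‖g‖²`
makes the residual decay like `e^{-η₀λt/3}`, and integrating
`‖θ'‖ ≤ (η₀/√n) K e^{-η₀λt/3} R₀` gives `‖θ(t) - θ₀‖ ≤ ρ (1 - e^{-η₀λt/3}) < ρ`.
A continuity argument shows that the flow therefore never leaves the ball.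
-/

open Matrix

/-- The Euclidean (ℓ²) norm of a vector in `ℝ^n`. -/
noncomputable def l2norm {n : ℕ} (v : Fin n → ℝ) : ℝ :=
  Real.sqrt (∑ i, v i ^ 2)

/-- The Frobenius norm of a real matrix. -/
noncomputable def frobeniusNorm {m n : ℕ} (A : Matrix (Fin m) (Fin n) ℝ) : ℝ :=
  Real.sqrt (∑ i, ∑ j, A i j ^ 2)

open Set Real WithLp
open scoped InnerProductSpace

attribute [local instance] Matrix.frobeniusNormedAddCommGroup Matrix.frobeniusNormedSpace

section Norms

variable {m n : ℕ}

theorem l2norm_eq_norm (v : Fin n → ℝ) : l2norm v = ‖toLp 2 v‖ := by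
  simp [l2norm, EuclideanSpace.norm_eq]

theorem frobeniusNorm_eq_norm (A : Matrix (Fin m) (Fin n) ℝ) : frobeniusNorm A = ‖A‖ := by
  simp [frobeniusNorm, Matrix.frobenius_norm_def, Real.sqrt_eq_rpow]

theorem dotProduct_eq_inner (v w : Fin n → ℝ) : v ⬝ᵥ w = ⟪toLp 2 v, toLp 2 w⟫_ℝ := by
  simp [EuclideanSpace.inner_toLp_toLp, dotProduct_comm]

theorem l2norm_nonneg (v : Fin n → ℝ) : 0 ≤ l2norm v := Real.sqrt_nonneg _

theorem frobeniusNorm_nonneg (A : Matrix (Fin m) (Fin n) ℝ) : 0 ≤ frobeniusNorm A :=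
  Real.sqrt_nonneg _

theorem l2norm_sub_comm (v w : Fin n → ℝ) : l2norm (v - w) = l2norm (w - v) := by
  simp only [l2norm_eq_norm, toLp_sub, norm_sub_rev]

theorem continuous_l2norm : Continuous (l2norm : (Fin n → ℝ) → ℝ) := by
  unfold l2norm; fun_prop

theorem l2norm_mulVec_le (A : Matrix (Fin m) (Fin n) ℝ) (v : Fin n → ℝ) :
    l2norm (A *ᵥ v) ≤ frobeniusNorm A * l2norm v := by
  rw [l2norm, l2norm, frobeniusNorm, ← Real.sqrt_mul (by positivity), Finset.sum_mul]
  exact Real.sqrt_le_sqrt <| Finset.sum_le_sum fun i _ =>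
    Finset.sum_mul_sq_le_sq_mul_sq Finset.univ (A i) v

theorem abs_dotProduct_mulVec_le (A : Matrix (Fin n) (Fin n) ℝ) (v : Fin n → ℝ) :
    |v ⬝ᵥ A *ᵥ v| ≤ frobeniusNorm A * l2norm v ^ 2 :=
  calc |v ⬝ᵥ A *ᵥ v| ≤ l2norm v * l2norm (A *ᵥ v) := by
        simpa only [dotProduct_eq_inner, l2norm_eq_norm] using abs_real_inner_le_norm _ _
    _ ≤ l2norm v * (frobeniusNorm A * l2norm v) :=
        mul_le_mul_of_nonneg_left (l2norm_mulVec_le A v) (l2norm_nonneg v)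
    _ = frobeniusNorm A * l2norm v ^ 2 := by ring

theorem frobeniusNorm_mul_transpose_sub_le (A B : Matrix (Fin m) (Fin n) ℝ) :
    frobeniusNorm (A * Aᵀ - B * Bᵀ) ≤
      (frobeniusNorm A + frobeniusNorm B) * frobeniusNorm (A - B) := by
  simp only [frobeniusNorm_eq_norm]
  have hsplit : A * Aᵀ - B * Bᵀ = A * (A - B)ᵀ + (A - B) * Bᵀ := by
    rw [transpose_sub, Matrix.mul_sub, Matrix.sub_mul]; abel
  calc ‖A * Aᵀ - B * Bᵀ‖ ≤ ‖A‖ * ‖(A - B)ᵀ‖ + ‖A - B‖ * ‖Bᵀ‖ := by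
        rw [hsplit]
        exact (norm_add_le _ _).trans
          (add_le_add (frobenius_norm_mul _ _) (frobenius_norm_mul _ _))
    _ = (‖A‖ + ‖B‖) * ‖A - B‖ := by
        rw [frobenius_norm_transpose, frobenius_norm_transpose]; ring

theorem frobeniusNorm_sub_le_add (A B C : Matrix (Fin m) (Fin n) ℝ) :
    frobeniusNorm (A - C) ≤ frobeniusNorm (A - B) + frobeniusNorm (B - C) := by
  simpa only [frobeniusNorm_eq_norm] using norm_sub_le_norm_sub_add_norm_sub A B C

theorem le_dotProduct_mulVec_of_frobeniusNorm_sub_le {A B : Matrix (Fin n) (Fin n) ℝ} {a b : ℝ}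
    (hA : ∀ v, a * l2norm v ^ 2 ≤ v ⬝ᵥ A *ᵥ v) (hAB : frobeniusNorm (A - B) ≤ a - b)
    (v : Fin n → ℝ) : b * l2norm v ^ 2 ≤ v ⬝ᵥ B *ᵥ v := by
  have h := (le_abs_self _).trans (abs_dotProduct_mulVec_le (A - B) v)
  rw [sub_mulVec, dotProduct_sub] at h
  nlinarith [hA v, mul_le_mul_of_nonneg_right hAB (sq_nonneg (l2norm v))]

end Norms

section Comparison

variable {E : Type*} [NormedAddCommGroup E]

theorem norm_le_exp_mul_of_inner_deriv_le [InnerProductSpace ℝ E] {G G' : ℝ → E} {c R T : ℝ}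
    (hG : ∀ t ∈ Icc 0 T, HasDerivAt G (G' t) t)
    (hdecay : ∀ t ∈ Ico 0 T, ⟪G t, G' t⟫_ℝ ≤ -c * ‖G t‖ ^ 2) (h0 : ‖G 0‖ ≤ R) :
    ∀ t ∈ Icc 0 T, ‖G t‖ ≤ exp (-(c * t)) * R := by
  have hsq := le_gronwallBound_of_liminf_deriv_right_le (f := fun t => ‖G t‖ ^ 2)
    (K := -(2 * c)) (ε := 0) (fun t ht => (hG t ht).norm_sq.continuousAt.continuousWithinAt)
    (fun t ht _ hr =>
      (hG t (Ico_subset_Icc_self ht)).norm_sq.hasDerivWithinAt.liminf_right_slope_le hr)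
    (pow_le_pow_left₀ (norm_nonneg _) h0 2) (fun t ht => by linarith [hdecay t ht])
  intro t ht
  have hR : 0 ≤ R := (norm_nonneg _).trans h0
  refine (pow_le_pow_iff_left₀ (norm_nonneg _) (by positivity) two_ne_zero).1 ?_
  calc ‖G t‖ ^ 2 ≤ R ^ 2 * exp (-(2 * c) * t) := by simpa [gronwallBound_ε0] using hsq t ht
    _ = (exp (-(c * t)) * R) ^ 2 := by rw [mul_pow, ← exp_nat_mul]; ring_nf

theorem norm_sub_le_of_norm_deriv_le_exp [NormedSpace ℝ E] {γ γ' : ℝ → E} {a c T : ℝ}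
    (hT : 0 ≤ T) (hγ : ∀ t ∈ Icc 0 T, HasDerivAt γ (γ' t) t)
    (hbound : ∀ t ∈ Ico 0 T, ‖γ' t‖ ≤ a * c * exp (-(c * t))) :
    ‖γ T - γ 0‖ ≤ a * (1 - exp (-(c * T))) := by
  have hB : ∀ t, HasDerivAt (fun s => a * (1 - exp (-(c * s)))) (a * c * exp (-(c * t))) t := by
    intro t
    have hlin : HasDerivAt (fun s => -(c * s)) (-c) t := by
      simpa using ((hasDerivAt_id t).const_mul c).fun_neg
    exact ((hlin.exp.const_sub 1).const_mul a).congr_deriv (by ring)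
  refine image_norm_le_of_norm_deriv_right_le_deriv_boundary (f := fun t => γ t - γ 0)
    (fun t ht => ((hγ t ht).sub_const _).continuousAt.continuousWithinAt)
    (fun t ht => ((hγ t (Ico_subset_Icc_self ht)).sub_const _).hasDerivWithinAt)
    (by simp) hB hbound ⟨hT, le_rfl⟩

end Comparison

theorem ContinuousOn.forall_lt_of_forall_le_imp_lt {φ : ℝ → ℝ} {ρ : ℝ}
    (hφ : ContinuousOn φ (Ici 0)) (h : ∀ T, 0 ≤ T → (∀ s ∈ Ico 0 T, φ s ≤ ρ) → φ T < ρ) :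
    ∀ t, 0 ≤ t → φ t < ρ := by
  by_contra! ⟨t, ht, hρt⟩
  have hbdd : BddBelow (Ici 0 ∩ φ ⁻¹' Ici ρ) := ⟨0, fun _ hx => hx.1⟩
  have hmem : sInf (Ici 0 ∩ φ ⁻¹' Ici ρ) ∈ Ici 0 ∩ φ ⁻¹' Ici ρ :=
    (hφ.preimage_isClosed_of_isClosed isClosed_Ici isClosed_Ici).csInf_mem ⟨t, ht, hρt⟩ hbdd
  refine (h _ hmem.1 fun s hs => ?_).not_ge hmem.2
  by_contra! hρs
  exact hs.2.not_ge (csInf_le hbdd ⟨hs.1, hρs.le⟩)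

theorem two_mul_sq_mul_div_le_div_three {K R lmin n : ℝ} (hK : 0 ≤ K) (hR : 0 ≤ R)
    (hlmin : 0 < lmin) (hn : (18 * K ^ 3 * R / lmin ^ 2) ^ 2 ≤ n) :
    2 * K ^ 2 * (3 * K * R / (lmin * √n)) ≤ lmin / 3 := by
  have h := (Real.le_sqrt (by positivity) ((sq_nonneg _).trans hn)).2 hn
  rw [div_le_iff₀ (by positivity)] at h
  rw [← mul_div_assoc]
  exact div_le_of_le_mul₀ (by positivity) (by positivity) (by nlinarith)

section GradientFlow

variable {N P : ℕ} {J : (Fin P → ℝ) → Matrix (Fin N) (Fin P) ℝ}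

noncomputable def empiricalNTK (J : (Fin P → ℝ) → Matrix (Fin N) (Fin P) ℝ) (n : ℝ)
    (θ : Fin P → ℝ) : Matrix (Fin N) (Fin N) ℝ :=
  (1 / n) • (J θ * (J θ)ᵀ)

theorem frobeniusNorm_empiricalNTK_sub_le {n K d : ℝ} (hn : 0 < n) {θ θ' : Fin P → ℝ}
    (hθ : frobeniusNorm (J θ) ≤ K * √n) (hθ' : frobeniusNorm (J θ') ≤ K * √n)
    (hd : frobeniusNorm (J θ - J θ') ≤ K * √n * d) :
    frobeniusNorm (empiricalNTK J n θ - empiricalNTK J n θ') ≤ 2 * K ^ 2 * d := by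
  have hKn : 0 ≤ K * √n := (frobeniusNorm_nonneg _).trans hθ
  rw [empiricalNTK, empiricalNTK, ← smul_sub, frobeniusNorm_eq_norm, norm_smul,
    ← frobeniusNorm_eq_norm, Real.norm_of_nonneg (by positivity)]
  calc 1 / n * frobeniusNorm (J θ * (J θ)ᵀ - J θ' * (J θ')ᵀ)
      ≤ 1 / n * ((K * √n + K * √n) * (K * √n * d)) := by
        refine mul_le_mul_of_nonneg_left ((frobeniusNorm_mul_transpose_sub_le _ _).trans ?_)
          (by positivity)
        exact mul_le_mul (add_le_add hθ hθ') hd (frobeniusNorm_nonneg _) (by positivity)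
    _ = 2 * K ^ 2 * d := by
        field_simp
        rw [Real.sq_sqrt hn.le]; ring

variable {f g : (Fin P → ℝ) → Fin N → ℝ} {Y : Fin N → ℝ} {θf : ℝ → Fin P → ℝ} {η₀ n : ℝ}

theorem hasDerivAt_residual (hf : ∀ θ, HasFDerivAt f ((J θ).mulVecLin.toContinuousLinearMap) θ)
    (hg : ∀ θ, g θ = f θ - Y) {t : ℝ}
    (hflow : HasDerivAt θf (-((η₀ / n) • ((J (θf t))ᵀ.mulVec (g (θf t))))) t) :
    HasDerivAt (fun s => g (θf s)) (-η₀ • (empiricalNTK J n (θf t) *ᵥ g (θf t))) t := by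
  have h := ((hf (θf t)).comp_hasDerivAt t hflow).sub_const Y
  rw [show (fun s => g (θf s)) = fun s => (f ∘ θf) s - Y from funext fun s => hg _]
  refine h.congr_deriv ?_
  simp only [LinearMap.coe_toContinuousLinearMap', mulVecLin_apply, mulVec_neg, mulVec_smul,
    mulVec_mulVec, empiricalNTK, smul_mulVec, smul_smul]
  rw [neg_mul, one_div, ← div_eq_mul_inv, neg_smul]

theorem l2norm_residual_le (hf : ∀ θ, HasFDerivAt f ((J θ).mulVecLin.toContinuousLinearMap) θ)
    (hg : ∀ θ, g θ = f θ - Y)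
    (hflow : ∀ t : ℝ, 0 ≤ t →
      HasDerivAt θf (-((η₀ / n) • ((J (θf t))ᵀ.mulVec (g (θf t))))) t)
    (hη₀ : 0 ≤ η₀) {a T : ℝ}
    (hpos : ∀ t ∈ Ico 0 T, ∀ v, a * l2norm v ^ 2 ≤ v ⬝ᵥ empiricalNTK J n (θf t) *ᵥ v) :
    ∀ t ∈ Icc 0 T, l2norm (g (θf t)) ≤ exp (-(η₀ * a * t)) * l2norm (g (θf 0)) := by
  simp only [l2norm_eq_norm]
  refine norm_le_exp_mul_of_inner_deriv_le
    (G' := fun t => toLp 2 (-η₀ • (empiricalNTK J n (θf t) *ᵥ g (θf t))))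
    (fun t ht => (EuclideanSpace.equiv (Fin N) ℝ).symm.hasFDerivAt.comp_hasDerivAt t
      (hasDerivAt_residual hf hg (hflow t ht.1))) (fun t ht => ?_) le_rfl
  rw [← dotProduct_eq_inner, ← l2norm_eq_norm, dotProduct_smul, smul_eq_mul]
  nlinarith [hpos t ht (g (θf t))]

theorem l2norm_sub_le_of_residual_le
    (hflow : ∀ t : ℝ, 0 ≤ t →
      HasDerivAt θf (-((η₀ / n) • ((J (θf t))ᵀ.mulVec (g (θf t))))) t)
    (hη₀ : 0 ≤ η₀) (hn : 0 < n) {K R a T : ℝ} (ha : a ≠ 0) (hT : 0 ≤ T)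
    (hJ : ∀ t ∈ Ico 0 T, frobeniusNorm (J (θf t)) ≤ K * √n)
    (hres : ∀ t ∈ Ico 0 T, l2norm (g (θf t)) ≤ exp (-(η₀ * a * t)) * R) :
    l2norm (θf T - θf 0) ≤ K * R / (a * √n) * (1 - exp (-(η₀ * a * T))) := by
  simp only [l2norm_eq_norm, toLp_sub]
  refine norm_sub_le_of_norm_deriv_le_exp hT
    (fun t ht => (EuclideanSpace.equiv (Fin P) ℝ).symm.hasFDerivAt.comp_hasDerivAt t
      (hflow t ht.1)) (fun t ht => ?_)
  change ‖toLp 2 _‖ ≤ _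
  rw [← l2norm_eq_norm]
  calc l2norm (-((η₀ / n) • ((J (θf t))ᵀ *ᵥ g (θf t))))
      = η₀ / n * l2norm ((J (θf t))ᵀ *ᵥ g (θf t)) := by
        rw [l2norm_eq_norm, l2norm_eq_norm, toLp_neg, toLp_smul, norm_neg, norm_smul,
          Real.norm_of_nonneg (by positivity)]
    _ ≤ η₀ / n * (K * √n * (exp (-(η₀ * a * t)) * R)) := by
        refine mul_le_mul_of_nonneg_left ((l2norm_mulVec_le _ _).trans ?_) (by positivity)
        rw [frobeniusNorm_eq_norm, frobenius_norm_transpose, ← frobeniusNorm_eq_norm]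
        exact mul_le_mul (hJ t ht) (hres t ht) (l2norm_nonneg _)
          ((frobeniusNorm_nonneg _).trans (hJ t ht))
    _ = K * R / (a * √n) * (η₀ * a) * exp (-(η₀ * a * t)) := by
        have hsn : √n ^ 2 = n := Real.sq_sqrt hn.le
        have : 0 < √n := Real.sqrt_pos.2 hn
        field_simp
        rw [hsn]; ring

theorem l2norm_sub_lt_of_bounds_on_ball
    (hf : ∀ θ, HasFDerivAt f ((J θ).mulVecLin.toContinuousLinearMap) θ)
    (hg : ∀ θ, g θ = f θ - Y)
    (hflow : ∀ t : ℝ, 0 ≤ t →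
      HasDerivAt θf (-((η₀ / n) • ((J (θf t))ᵀ.mulVec (g (θf t))))) t)
    (hη₀ : 0 ≤ η₀) (hn : 0 < n) {a K R ρ : ℝ} (ha : a ≠ 0) (hR : l2norm (g (θf 0)) ≤ R)
    (hpos : ∀ θ, l2norm (θ - θf 0) ≤ ρ →
      ∀ v, a * l2norm v ^ 2 ≤ v ⬝ᵥ empiricalNTK J n θ *ᵥ v)
    (hJ : ∀ θ, l2norm (θ - θf 0) ≤ ρ → frobeniusNorm (J θ) ≤ K * √n)
    (hρ_pos : 0 < ρ) (hρ : ρ = K * R / (a * √n)) :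
    ∀ t, 0 ≤ t → l2norm (θf t - θf 0) < ρ := by
  refine ContinuousOn.forall_lt_of_forall_le_imp_lt ?_ fun T hT hball => ?_
  · exact continuous_l2norm.comp_continuousOn fun t ht =>
      ((hflow t ht).continuousAt.sub continuousAt_const).continuousWithinAt
  have hres := l2norm_residual_le hf hg hflow hη₀ fun t ht => hpos _ (hball t ht)
  calc l2norm (θf T - θf 0) ≤ K * R / (a * √n) * (1 - exp (-(η₀ * a * T))) :=
        l2norm_sub_le_of_residual_le hflow hη₀ hn ha hT (fun t ht => hJ _ (hball t ht))
          fun t ht => (hres t (Ico_subset_Icc_self ht)).trans (by gcongr)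
    _ < ρ := hρ ▸ mul_lt_of_lt_one_right (hρ ▸ hρ_pos) (sub_lt_self _ (exp_pos _))

end GradientFlow

theorem gradient_flow_convergence_and_ntk_stability_general {N P : ℕ}
    (f : (Fin P → ℝ) → (Fin N → ℝ))
    (J : (Fin P → ℝ) → Matrix (Fin N) (Fin P) ℝ)
    (hf : ∀ θ, HasFDerivAt f ((J θ).mulVecLin.toContinuousLinearMap) θ)
    (Y : Fin N → ℝ) (g : (Fin P → ℝ) → (Fin N → ℝ)) (hg : ∀ θ, g θ = f θ - Y)
    (θ₀ : Fin P → ℝ)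
    (K R₀ lmin : ℝ) (hK : 1 ≤ K) (hR₀ : 0 < R₀) (hlmin : 0 < lmin)
    (η₀ : ℝ) (hη₀pos : 0 < η₀)
    (Θ : Matrix (Fin N) (Fin N) ℝ)
    (hΘlb : ∀ v : Fin N → ℝ, lmin * l2norm v ^ 2 ≤ v ⬝ᵥ Θ.mulVec v)
    (n : ℝ) (hn : 0 < n) (hnbig : (18 * K ^ 3 * R₀ / lmin ^ 2) ^ 2 ≤ n)
    (hJlip : ∀ θ θ' : Fin P → ℝ,
      l2norm (θ - θ₀) ≤ 3 * K * R₀ / (lmin * Real.sqrt n) →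
      l2norm (θ' - θ₀) ≤ 3 * K * R₀ / (lmin * Real.sqrt n) →
      frobeniusNorm (J θ - J θ') ≤ K * Real.sqrt n * l2norm (θ - θ') ∧
        frobeniusNorm (J θ) ≤ K * Real.sqrt n)
    (hg₀ : l2norm (g θ₀) ≤ R₀)
    (hΘclose : frobeniusNorm (Θ - (1 / n) • (J θ₀ * (J θ₀)ᵀ)) ≤ lmin / 3)
    (θf : ℝ → (Fin P → ℝ)) (hθf0 : θf 0 = θ₀)
    (hflow : ∀ t : ℝ, 0 ≤ t →
      HasDerivAt θf (-((η₀ / n) • ((J (θf t))ᵀ.mulVec (g (θf t))))) t) :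
    ∀ t : ℝ, 0 ≤ t →
      l2norm (g (θf t)) ≤ Real.exp (-(η₀ * lmin * t / 3)) * R₀ ∧
      l2norm (θf t - θ₀) ≤
        (3 * K * R₀ / lmin) * (1 - Real.exp (-(η₀ * lmin * t / 3))) / Real.sqrt n ∧
      frobeniusNorm ((1 / n) • (J θ₀ * (J θ₀)ᵀ) - (1 / n) • (J (θf t) * (J (θf t))ᵀ)) ≤
        6 * K ^ 3 * R₀ / (lmin * Real.sqrt n) := by
  subst hθf0
  simp only [show ∀ t, η₀ * lmin * t / 3 = η₀ * (lmin / 3) * t from fun t => by ring]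
  set ρ := 3 * K * R₀ / (lmin * √n) with hρ
  have hρ_pos : 0 < ρ := by have := Real.sqrt_pos.2 hn; positivity
  have hθ₀ : l2norm (θf 0 - θf 0) ≤ ρ := by simpa [l2norm] using hρ_pos.le
  have hJ (θ) (hθ : l2norm (θ - θf 0) ≤ ρ) : frobeniusNorm (J θ) ≤ K * √n := (hJlip θ _ hθ hθ₀).2
  have hstable (θ) (hθ : l2norm (θ - θf 0) ≤ ρ) :
      frobeniusNorm (empiricalNTK J n (θf 0) - empiricalNTK J n θ) ≤ 2 * K ^ 2 * ρ :=
    frobeniusNorm_empiricalNTK_sub_le hn (hJ _ hθ₀) (hJ θ hθ)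
      ((hJlip _ θ hθ₀ hθ).1.trans (by rw [l2norm_sub_comm]; gcongr))
  have hpos (θ) (hθ : l2norm (θ - θf 0) ≤ ρ) (v : Fin N → ℝ) :
      lmin / 3 * l2norm v ^ 2 ≤ v ⬝ᵥ empiricalNTK J n θ *ᵥ v := by
    refine le_dotProduct_mulVec_of_frobeniusNorm_sub_le hΘlb ?_ v
    have hdrift := (hstable θ hθ).trans
      (two_mul_sq_mul_div_le_div_three (by linarith) hR₀.le hlmin hnbig)
    have hΘ₀ : frobeniusNorm (Θ - empiricalNTK J n (θf 0)) ≤ lmin / 3 := hΘclose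
    linarith [frobeniusNorm_sub_le_add Θ (empiricalNTK J n (θf 0)) (empiricalNTK J n θ)]
  have hstay := l2norm_sub_lt_of_bounds_on_ball hf hg hflow hη₀pos.le hn (by positivity) hg₀
    hpos hJ hρ_pos (by rw [hρ]; field_simp)
  intro t ht
  have hball (s) (hs : s ∈ Ico 0 t) : l2norm (θf s - θf 0) ≤ ρ := (hstay s hs.1).le
  have hres (s) (hs : s ∈ Icc 0 t) : l2norm (g (θf s)) ≤ exp (-(η₀ * (lmin / 3) * s)) * R₀ :=
    (l2norm_residual_le hf hg hflow hη₀pos.le (fun s hs => hpos _ (hball s hs)) s hs).trans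
      (by gcongr)
  refine ⟨hres t ⟨ht, le_rfl⟩, ?_, (hstable _ (hstay t ht).le).trans_eq (by ring)⟩
  exact (l2norm_sub_le_of_residual_le hflow hη₀pos.le hn (by positivity) ht
    (fun s hs => hJ _ (hball s hs)) fun s hs => hres s (Ico_subset_Icc_self hs)).trans_eq
    (by field_simp)

/-- Global convergence of gradient flow and stability of the empirical
neural tangent kernel `Θ̂_t = (1/n) J(θ(t)) J(θ(t))ᵀ` for a wide network, under local
Lipschitzness of the Jacobian and closeness of the initial empirical kernel to the analytic
kernel `Θ`. -/
theorem gradient_flow_convergence_and_ntk_stability {N P : ℕ}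
    (f : (Fin P → ℝ) → (Fin N → ℝ))
    (J : (Fin P → ℝ) → Matrix (Fin N) (Fin P) ℝ)
    (hf : ∀ θ, HasFDerivAt f ((J θ).mulVecLin.toContinuousLinearMap) θ)
    (hJcont : Continuous J)
    (Y : Fin N → ℝ) (g : (Fin P → ℝ) → (Fin N → ℝ)) (hg : ∀ θ, g θ = f θ - Y)
    (θ₀ : Fin P → ℝ)
    (K R₀ lmin : ℝ) (hK : 1 ≤ K) (hR₀ : 0 < R₀) (hlmin : 0 < lmin)
    (η₀ : ℝ) (hη₀pos : 0 < η₀)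
    (Θ : Matrix (Fin N) (Fin N) ℝ) (hΘsym : Θ.IsSymm)
    (hΘlb : ∀ v : Fin N → ℝ, lmin * l2norm v ^ 2 ≤ v ⬝ᵥ Θ.mulVec v)
    (n : ℝ) (hn : 0 < n) (hnbig : (18 * K ^ 3 * R₀ / lmin ^ 2) ^ 2 ≤ n)
    (hJlip : ∀ θ θ' : Fin P → ℝ,
      l2norm (θ - θ₀) ≤ 3 * K * R₀ / (lmin * Real.sqrt n) →
      l2norm (θ' - θ₀) ≤ 3 * K * R₀ / (lmin * Real.sqrt n) →
      frobeniusNorm (J θ - J θ') ≤ K * Real.sqrt n * l2norm (θ - θ') ∧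
        frobeniusNorm (J θ) ≤ K * Real.sqrt n)
    (hg₀ : l2norm (g θ₀) ≤ R₀)
    (hΘclose : frobeniusNorm (Θ - (1 / n) • (J θ₀ * (J θ₀)ᵀ)) ≤ lmin / 3)
    (θf : ℝ → (Fin P → ℝ)) (hθf0 : θf 0 = θ₀)
    (hflow : ∀ t : ℝ, 0 ≤ t →
      HasDerivAt θf (-((η₀ / n) • ((J (θf t))ᵀ.mulVec (g (θf t))))) t) :
    ∀ t : ℝ, 0 ≤ t →
      l2norm (g (θf t)) ≤ Real.exp (-(η₀ * lmin * t / 3)) * R₀ ∧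
      l2norm (θf t - θ₀) ≤
        (3 * K * R₀ / lmin) * (1 - Real.exp (-(η₀ * lmin * t / 3))) / Real.sqrt n ∧
      frobeniusNorm ((1 / n) • (J θ₀ * (J θ₀)ᵀ) - (1 / n) • (J (θf t) * (J (θf t))ᵀ)) ≤
        6 * K ^ 3 * R₀ / (lmin * Real.sqrt n) :=
  gradient_flow_convergence_and_ntk_stability_general f J hf Y g hg θ₀ K R₀ lmin hK hR₀ hlmin η₀
    hη₀pos Θ hΘlb n hn hnbig hJlip hg₀ hΘclose θf hθf0 hflow
end
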